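/- Let ψ, θ be C¹ functions on the closure of Ω, and let R, C > 0 with ‖θ‖₂ ≤ C·‖∇θ‖₂, |∂_yθ| ≤ R/√2 on Ω, and |∂_yψ| ≤ R/√2 on Ω. Then ∫_Ω |J(ψ,θ)·θ| ≤ (C·R/(2√2))·‖∇ψ‖₂² + (3·R·C/(2√2))·‖∇θ‖₂². -/

import Mathlib

open MeasureTheory Real Set Filter

noncomputable section

/-- The open unit square Ω = (0,1) × (0,1) in ℝ². -/
def Omg : Set (ℝ × ℝ) := Ioo (0:ℝ) 1 ×ˢ Ioo (0:ℝ) 1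

/-- Partial derivative in the x-direction. -/
def px (f : ℝ × ℝ → ℝ) (p : ℝ × ℝ) : ℝ := fderiv ℝ f p (1, 0)

/-- Partial derivative in the y-direction. -/
def py (f : ℝ × ℝ → ℝ) (p : ℝ × ℝ) : ℝ := fderiv ℝ f p (0, 1)

/-- Laplacian. -/
def lap (f : ℝ × ℝ → ℝ) (p : ℝ × ℝ) : ℝ := px (px f) p + py (py f) p

/-- Jacobian determinant J(ψ,θ) = ∂ₓψ·∂_yθ − ∂_yψ·∂ₓθ. -/
def Jac (ψ θ : ℝ × ℝ → ℝ) (p : ℝ × ℝ) : ℝ := px ψ p * py θ p - py ψ p * px θ p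

/-- The L^q norm over Ω: ‖f‖_q = (∫_Ω |f|^q)^(1/q). -/
def Lnorm (f : ℝ × ℝ → ℝ) (q : ℝ) : ℝ := (∫ p in Omg, |f p| ^ q) ^ (1 / q)

/-- ‖∇f‖₂ = (∫_Ω (|∂ₓf|² + |∂_yf|²))^(1/2). -/
def gradNorm (f : ℝ × ℝ → ℝ) : ℝ :=
  (∫ p in Omg, (|px f p| ^ 2 + |py f p| ^ 2)) ^ ((1:ℝ) / 2)


/- Pointwise, |J(ψ,θ)θ| ≤ (|∂ₓψ| + |∂ₓθ|)|θ|·R/√2 by the bounds on the y-derivatives, and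
Young's inequality |a θ| ≤ (C/2)a² + θ²/(2C) splits each product. Integrating, the θ² term
is absorbed into ‖∇θ‖₂² by the Poincaré-type hypothesis ‖θ‖₂ ≤ C‖∇θ‖₂. Everything is
integrable because being C¹ on the closed square makes ψ, θ and their partial derivatives
continuous up to the boundary. -/

lemma abs_mul_le_young {C : ℝ} (hC : 0 < C) (x t : ℝ) :
    |x * t| ≤ C / 2 * x ^ 2 + 1 / (2 * C) * t ^ 2 := by
  rw [← mul_le_mul_iff_right₀ (by positivity : 0 < 2 * C)]
  field_simp
  nlinarith [sq_nonneg (C * |x| - |t|), sq_abs x, sq_abs t, abs_mul x t]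

lemma abs_sub_mul_mul_le {a b c d t K C : ℝ} (hC : 0 < C) (hb : |b| ≤ K) (hd : |d| ≤ K) :
    |(a * d - b * c) * t| ≤ K * (C / 2 * a ^ 2 + C / 2 * c ^ 2 + 1 / C * t ^ 2) := by
  have hK : 0 ≤ K := (abs_nonneg b).trans hb
  calc |(a * d - b * c) * t| ≤ |d| * |a * t| + |b| * |c * t| := by
        rw [abs_mul, abs_mul a, abs_mul c]
        nlinarith [abs_sub (a * d) (b * c), abs_mul a d, abs_mul b c, abs_nonneg t]
    _ ≤ K * (C / 2 * a ^ 2 + 1 / (2 * C) * t ^ 2)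
          + K * (C / 2 * c ^ 2 + 1 / (2 * C) * t ^ 2) := by
        gcongr
        · exact abs_mul_le_young hC a t
        · exact abs_mul_le_young hC c t
    _ = K * (C / 2 * a ^ 2 + C / 2 * c ^ 2 + 1 / C * t ^ 2) := by
        field_simp
        ring

lemma ContinuousOn.integrableOn_of_closure {X F : Type*} [TopologicalSpace X] [MeasurableSpace X]
    [OpensMeasurableSpace X] [NormedAddCommGroup F] {μ : Measure X} [IsFiniteMeasureOnCompacts μ]
    {U : Set X} {g : X → F} (hK : IsCompact (closure U)) (hg : ContinuousOn g (closure U)) :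
    IntegrableOn g U μ :=
  (hg.integrableOn_compact' hK isClosed_closure.measurableSet).mono_set subset_closure

lemma ContDiffOn.integrableOn_fderiv_apply_sq {E : Type*} [NormedAddCommGroup E]
    [NormedSpace ℝ E] [MeasurableSpace E] [OpensMeasurableSpace E] {μ : Measure E}
    [IsFiniteMeasureOnCompacts μ] {U : Set E} {f : E → ℝ} (hU : IsOpen U)
    (hK : IsCompact (closure U)) (hud : UniqueDiffOn ℝ (closure U))
    (hf : ContDiffOn ℝ 1 f (closure U)) (v : E) :
    IntegrableOn (fun p => fderiv ℝ f p v ^ 2) U μ := by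
  have hcont : ContinuousOn (fun p => fderivWithin ℝ f (closure U) p v ^ 2) (closure U) :=
    ((hf.continuousOn_fderivWithin hud le_rfl).clm_apply continuousOn_const).pow 2
  refine (hcont.integrableOn_of_closure hK).congr_fun (fun p hp => ?_) hU.measurableSet
  dsimp only
  rw [fderivWithin_of_mem_nhds (mem_of_superset (hU.mem_nhds hp) subset_closure)]

lemma isOpen_Omg : IsOpen Omg := isOpen_Ioo.prod isOpen_Ioo

lemma closure_Omg : closure Omg = Icc (0:ℝ) 1 ×ˢ Icc (0:ℝ) 1 := by
  rw [Omg, closure_prod_eq, closure_Ioo zero_ne_one]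

lemma isCompact_closure_Omg : IsCompact (closure Omg) := by
  rw [closure_Omg]
  exact isCompact_Icc.prod isCompact_Icc

lemma uniqueDiffOn_closure_Omg : UniqueDiffOn ℝ (closure Omg) := by
  rw [closure_Omg]
  exact (uniqueDiffOn_Icc one_pos).prod (uniqueDiffOn_Icc one_pos)

lemma integrableOn_sq {f : ℝ × ℝ → ℝ} (hf : ContDiffOn ℝ 1 f (closure Omg)) :
    IntegrableOn (fun p => f p ^ 2) Omg :=
  (hf.continuousOn.pow 2).integrableOn_of_closure isCompact_closure_Omg

lemma integrableOn_px_sq {f : ℝ × ℝ → ℝ} (hf : ContDiffOn ℝ 1 f (closure Omg)) :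
    IntegrableOn (fun p => px f p ^ 2) Omg :=
  hf.integrableOn_fderiv_apply_sq isOpen_Omg isCompact_closure_Omg uniqueDiffOn_closure_Omg _

lemma integrableOn_py_sq {f : ℝ × ℝ → ℝ} (hf : ContDiffOn ℝ 1 f (closure Omg)) :
    IntegrableOn (fun p => py f p ^ 2) Omg :=
  hf.integrableOn_fderiv_apply_sq isOpen_Omg isCompact_closure_Omg uniqueDiffOn_closure_Omg _

lemma gradNorm_sq (f : ℝ × ℝ → ℝ) :
    gradNorm f ^ 2 = ∫ p in Omg, (px f p ^ 2 + py f p ^ 2) := by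
  simp only [gradNorm, sq_abs, ← Real.sqrt_eq_rpow]
  exact Real.sq_sqrt (integral_nonneg fun p => by positivity)

lemma Lnorm_two_sq (f : ℝ × ℝ → ℝ) : Lnorm f 2 ^ 2 = ∫ p in Omg, f p ^ 2 := by
  have h : ∀ p, |f p| ^ (2 : ℝ) = f p ^ 2 := fun p => by rw [Real.rpow_two, sq_abs]
  rw [Lnorm, ← Real.sqrt_eq_rpow]
  simp only [h]
  exact Real.sq_sqrt (integral_nonneg fun p => by positivity)

lemma integral_px_sq_le_gradNorm_sq {f : ℝ × ℝ → ℝ} (hf : ContDiffOn ℝ 1 f (closure Omg)) :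
    ∫ p in Omg, px f p ^ 2 ≤ gradNorm f ^ 2 := by
  rw [gradNorm_sq]
  exact integral_mono (integrableOn_px_sq hf)
    ((integrableOn_px_sq hf).add (integrableOn_py_sq hf))
    fun p => le_add_of_nonneg_right (sq_nonneg _)

lemma integral_sq_le_of_Lnorm_le {f : ℝ × ℝ → ℝ} {C : ℝ} (hP : Lnorm f 2 ≤ C * gradNorm f) :
    ∫ p in Omg, f p ^ 2 ≤ C ^ 2 * gradNorm f ^ 2 := by
  rw [← Lnorm_two_sq, ← mul_pow]
  exact pow_le_pow_left₀ (Real.rpow_nonneg (integral_nonneg fun p => by positivity) _) hP 2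

lemma integral_abs_jac_mul_le {ψ θ : ℝ × ℝ → ℝ} {K C : ℝ} (hC : 0 < C)
    (hψ : ContDiffOn ℝ 1 ψ (closure Omg)) (hθ : ContDiffOn ℝ 1 θ (closure Omg))
    (hbdθ : ∀ p ∈ Omg, |py θ p| ≤ K) (hbdψ : ∀ p ∈ Omg, |py ψ p| ≤ K) :
    ∫ p in Omg, |Jac ψ θ p * θ p|
      ≤ K * (C / 2 * ∫ p in Omg, px ψ p ^ 2) + K * (C / 2 * ∫ p in Omg, px θ p ^ 2)
        + K * (1 / C * ∫ p in Omg, θ p ^ 2) := by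
  have hψx := (integrableOn_px_sq hψ).const_mul (C / 2)
  have hθx := (integrableOn_px_sq hθ).const_mul (C / 2)
  have hθ2 := (integrableOn_sq hθ).const_mul (1 / C)
  have hψθx : IntegrableOn (fun p => C / 2 * px ψ p ^ 2 + C / 2 * px θ p ^ 2) Omg := hψx.add hθx
  have hpointwise : ∀ p ∈ Omg, |Jac ψ θ p * θ p|
      ≤ K * (C / 2 * px ψ p ^ 2 + C / 2 * px θ p ^ 2 + 1 / C * θ p ^ 2) :=
    fun p hp => abs_sub_mul_mul_le hC (hbdψ p hp) (hbdθ p hp)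
  calc ∫ p in Omg, |Jac ψ θ p * θ p|
      ≤ ∫ p in Omg, K * (C / 2 * px ψ p ^ 2 + C / 2 * px θ p ^ 2 + 1 / C * θ p ^ 2) :=
        integral_mono_of_nonneg (ae_of_all _ fun p => abs_nonneg _)
          ((hψθx.add hθ2).const_mul K)
          (ae_restrict_of_forall_mem isOpen_Omg.measurableSet hpointwise)
    _ = _ := by
        rw [integral_const_mul, integral_add hψθx hθ2, integral_add hψx hθx,
          integral_const_mul, integral_const_mul, integral_const_mul]
        ring

/-- Estimate of the nonlinear term used in the stability estimate. -/
theorem stmt_9 (ψ θ : ℝ × ℝ → ℝ) (R C : ℝ) (hR : 0 < R) (hC : 0 < C)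
    (hψ : ContDiffOn ℝ 1 ψ (closure Omg)) (hθ : ContDiffOn ℝ 1 θ (closure Omg))
    (hP : Lnorm θ 2 ≤ C * gradNorm θ)
    (hbdθ : ∀ p ∈ Omg, |py θ p| ≤ R / Real.sqrt 2)
    (hbdψ : ∀ p ∈ Omg, |py ψ p| ≤ R / Real.sqrt 2) :
    (∫ p in Omg, |Jac ψ θ p * θ p|)
      ≤ (C * R / (2 * Real.sqrt 2)) * gradNorm ψ ^ 2
        + (3 * R * C / (2 * Real.sqrt 2)) * gradNorm θ ^ 2 := by
  have hK : 0 ≤ R / Real.sqrt 2 := by positivity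
  calc (∫ p in Omg, |Jac ψ θ p * θ p|)
      ≤ R / Real.sqrt 2 * (C / 2 * ∫ p in Omg, px ψ p ^ 2)
        + R / Real.sqrt 2 * (C / 2 * ∫ p in Omg, px θ p ^ 2)
        + R / Real.sqrt 2 * (1 / C * ∫ p in Omg, θ p ^ 2) :=
        integral_abs_jac_mul_le hC hψ hθ hbdθ hbdψ
    _ ≤ R / Real.sqrt 2 * (C / 2 * gradNorm ψ ^ 2) + R / Real.sqrt 2 * (C / 2 * gradNorm θ ^ 2)
        + R / Real.sqrt 2 * (1 / C * (C ^ 2 * gradNorm θ ^ 2)) := by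
        gcongr
        · exact integral_px_sq_le_gradNorm_sq hψ
        · exact integral_px_sq_le_gradNorm_sq hθ
        · exact integral_sq_le_of_Lnorm_le hP
    _ = _ := by
        field_simp
        ring
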